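/- Closedness of the symplectic form for the colored annulus (double symplectic groupoid of the Drinfeld double): let 𝔯, 𝔟 ⊆ A be isotropic subalgebras, let r₁, r₂ : E → Aˣ be smooth with α_{r₁}, α_{r₂} valued in 𝔯, let b₁, b₂ : E → Aˣ be smooth with α_{b₁}, α_{b₂} valued in 𝔟, and let g : E → Aˣ be an arbitrary smooth map, such that r₁·b₁·g = g·r₂·b₂ pointwise. Then the 2-form ω = λ(r₁,b₁) + λ(r₁b₁, g) − λ(g, r₂) − λ(g r₂, b₂) is closed: dω = 0. -/

import Mathlib

/-! STATEMENT 9: closedness of the symplectic form of the colored annulus (double symplectic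
groupoid of the Drinfeld double): if `α_{r₁}, α_{r₂}` are valued in the isotropic subalgebra
`𝔯`, `α_{b₁}, α_{b₂}` in `𝔟`, `g` is an arbitrary smooth map `E → Aˣ`, and
`r₁·b₁·g = g·r₂·b₂`, then `ω = λ(r₁,b₁) + λ(r₁b₁, g) − λ(g, r₂) − λ(g r₂, b₂)` is closed. -/

/-- A smooth map `E → Aˣ`, encoded as a smooth `A`-valued map with invertible values. -/
def SmoothUnitMap {E : Type*} [NormedAddCommGroup E] [NormedSpace ℝ E]
    {A : Type*} [NormedRing A] [NormedAlgebra ℝ A] (g : E → A) : Prop :=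
  ContDiff ℝ (⊤ : ℕ∞) g ∧ ∀ x, IsUnit (g x)

/-- `α_g(x)v = g(x)⁻¹ * (D_v g)(x)`. -/
noncomputable def alphaD {E : Type*} [NormedAddCommGroup E] [NormedSpace ℝ E]
    {A : Type*} [NormedRing A] [NormedAlgebra ℝ A] (g : E → A) (x v : E) : A :=
  Ring.inverse (g x) * (fderiv ℝ g x v)

/-- `β_g(x)v = (D_v g)(x) * g(x)⁻¹`. -/
noncomputable def betaD {E : Type*} [NormedAddCommGroup E] [NormedSpace ℝ E]
    {A : Type*} [NormedRing A] [NormedAlgebra ℝ A] (g : E → A) (x v : E) : A :=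
  (fderiv ℝ g x v) * Ring.inverse (g x)

/-- `λ(g₁,g₂)(x)(v,w) = (1/2)(⟨α_{g₁}(x)v, β_{g₂}(x)w⟩ − ⟨α_{g₁}(x)w, β_{g₂}(x)v⟩)`. -/
noncomputable def lamForm {E : Type*} [NormedAddCommGroup E] [NormedSpace ℝ E]
    {A : Type*} [NormedRing A] [NormedAlgebra ℝ A]
    (B : A →ₗ[ℝ] A →ₗ[ℝ] ℝ) (g₁ g₂ : E → A) (x v w : E) : ℝ :=
  (1 / 2) * (B (alphaD g₁ x v) (betaD g₂ x w) - B (alphaD g₁ x w) (betaD g₂ x v))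

/-- Exterior derivative of a 2-form given by its values:
`dω(x)(v₀,v₁,v₂) = D_{v₀}ω(·)(v₁,v₂) − D_{v₁}ω(·)(v₀,v₂) + D_{v₂}ω(·)(v₀,v₁)`. -/
noncomputable def extDeriv2 {E : Type*} [NormedAddCommGroup E] [NormedSpace ℝ E]
    (ω : E → E → E → ℝ) (x v₀ v₁ v₂ : E) : ℝ :=
  fderiv ℝ (fun y => ω y v₁ v₂) x v₀
    - fderiv ℝ (fun y => ω y v₀ v₂) x v₁
    + fderiv ℝ (fun y => ω y v₀ v₁) x v₂

/-- An isotropic subalgebra of `A`: a subspace `𝔥` with `[𝔥,𝔥] ⊆ 𝔥` and `⟨𝔥,𝔥⟩ = 0`. -/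
def IsIsotropicSubalg {A : Type*} [NormedRing A] [NormedAlgebra ℝ A]
    (B : A →ₗ[ℝ] A →ₗ[ℝ] ℝ) (𝔥 : Submodule ℝ A) : Prop :=
  (∀ a ∈ 𝔥, ∀ b ∈ 𝔥, a * b - b * a ∈ 𝔥) ∧ (∀ a ∈ 𝔥, ∀ b ∈ 𝔥, B a b = 0)

section Aux
open ContinuousLinearMap
variable {E : Type*} [NormedAddCommGroup E] [NormedSpace ℝ E]
variable {A : Type*} [NormedRing A] [NormedAlgebra ℝ A] [CompleteSpace A]

lemma exists_bound_of_continuous (B : A →ₗ[ℝ] A →ₗ[ℝ] ℝ)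
    (Bcont : Continuous fun p : A × A => B p.1 p.2) :
    ∃ C, ∀ x y, ‖B x y‖ ≤ C * ‖x‖ * ‖y‖ := by
  have h0 : (fun p : A × A => B p.1 p.2) (0, 0) = 0 := by simp
  have hc : ContinuousAt (fun p : A × A => B p.1 p.2) (0, 0) := Bcont.continuousAt
  rw [Metric.continuousAt_iff] at hc
  obtain ⟨δ, δpos, hδ⟩ := hc 1 one_pos
  refine ⟨4 / (δ * δ), fun x y => ?_⟩
  rcases eq_or_ne x 0 with rfl | hx
  · simp
  rcases eq_or_ne y 0 with rfl | hy
  · simpa using by positivity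
  have hxn : (0:ℝ) < ‖x‖ := norm_pos_iff.2 hx
  have hyn : (0:ℝ) < ‖y‖ := norm_pos_iff.2 hy
  set s : ℝ := δ / (2 * ‖x‖) with hs
  set t : ℝ := δ / (2 * ‖y‖) with ht
  have hspos : 0 < s := by positivity
  have htpos : 0 < t := by positivity
  have hkey : ‖B (s • x) (t • y)‖ < 1 := by
    have hdist : dist ((s • x, t • y) : A × A) (0, 0) < δ := by
      rw [Prod.dist_eq]
      have h1 : dist (s • x) (0:A) = δ / 2 := by
        rw [dist_zero_right, norm_smul, Real.norm_eq_abs, abs_of_pos hspos, hs]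
        field_simp
      have h2 : dist (t • y) (0:A) = δ / 2 := by
        rw [dist_zero_right, norm_smul, Real.norm_eq_abs, abs_of_pos htpos, ht]
        field_simp
      rw [h1, h2]
      simp [max_self]
      linarith
    have h' := hδ hdist
    simpa using h'
  have heq : B (s • x) (t • y) = s * t * B x y := by
    simp [map_smul, smul_eq_mul]; ring
  rw [heq] at hkey
  rw [norm_mul, Real.norm_eq_abs, abs_of_pos (mul_pos hspos htpos)] at hkey
  have h4 : s * t = δ * δ / (4 * (‖x‖ * ‖y‖)) := by rw [hs, ht]; field_simp; ring
  have := (lt_div_iff₀ (by positivity : (0:ℝ) < s*t)).2 (by rwa [mul_comm] at hkey)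
  calc ‖B x y‖ ≤ 1 / (s * t) := le_of_lt this
    _ = 4 / (δ * δ) * ‖x‖ * ‖y‖ := by rw [h4]; field_simp

lemma SmoothUnitMap.diffAt {g : E → A} (hg : SmoothUnitMap g) (x : E) :
    DifferentiableAt ℝ g x := (hg.1.differentiable (by simp)).differentiableAt

lemma SmoothUnitMap.fderiv_diffAt {g : E → A} (hg : SmoothUnitMap g) (x : E) :
    DifferentiableAt ℝ (fderiv ℝ g) x :=
  (((hg.1.fderiv_right (m := 1) (by exact WithTop.coe_le_coe.2 le_top)).differentiable (by simp)) x)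

lemma SmoothUnitMap.symmD2 {g : E → A} (hg : SmoothUnitMap g) (x u v : E) :
    fderiv ℝ (fderiv ℝ g) x u v = fderiv ℝ (fderiv ℝ g) x v u :=
  (hg.1.contDiffAt.isSymmSndFDerivAt (by rw [minSmoothness_of_isRCLikeNormedField]; exact WithTop.coe_le_coe.2 le_top)) u v

lemma inv_hasFDerivAt {g : E → A} (hg : SmoothUnitMap g) (x : E) :
    HasFDerivAt (fun y => Ring.inverse (g y))
      ((-mulLeftRight ℝ A (Ring.inverse (g x)) (Ring.inverse (g x))).comp (fderiv ℝ g x)) x := by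
  have hU := hg.2 x
  have h1 : HasFDerivAt Ring.inverse
      (-mulLeftRight ℝ A (Ring.inverse (g x)) (Ring.inverse (g x))) (g x) := by
    have h := hasFDerivAt_ringInverse (𝕜 := ℝ) hU.unit
    rw [hU.unit_spec] at h
    have : (↑hU.unit⁻¹ : A) = Ring.inverse (g x) := by
      rw [← Ring.inverse_unit hU.unit, hU.unit_spec]
    rwa [this] at h
  exact h1.comp x (hg.diffAt x).hasFDerivAt

lemma alphaD_hasFDerivAt {g : E → A} (hg : SmoothUnitMap g) (x v : E) :
    ∃ L : E →L[ℝ] A, HasFDerivAt (fun y => alphaD g y v) L x ∧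
      ∀ u, L u = Ring.inverse (g x) * (fderiv ℝ (fderiv ℝ g) x u v)
          - alphaD g x u * alphaD g x v := by
  have h1 := inv_hasFDerivAt hg x
  have h2 : HasFDerivAt (fun y => fderiv ℝ g y v)
      ((ContinuousLinearMap.apply ℝ A v).comp (fderiv ℝ (fderiv ℝ g) x)) x :=
    ((ContinuousLinearMap.apply ℝ A v).hasFDerivAt).comp x (hg.fderiv_diffAt x).hasFDerivAt
  refine ⟨_, h1.mul' h2, fun u => ?_⟩
  simp [alphaD, mulLeftRight_apply, smul_eq_mul, sub_eq_add_neg, mul_assoc]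


lemma betaD_hasFDerivAt {g : E → A} (hg : SmoothUnitMap g) (x v : E) :
    ∃ L : E →L[ℝ] A, HasFDerivAt (fun y => betaD g y v) L x ∧
      ∀ u, L u = (fderiv ℝ (fderiv ℝ g) x u v) * Ring.inverse (g x)
          - betaD g x v * betaD g x u := by
  have h1 := inv_hasFDerivAt hg x
  have h2 : HasFDerivAt (fun y => fderiv ℝ g y v)
      ((ContinuousLinearMap.apply ℝ A v).comp (fderiv ℝ (fderiv ℝ g) x)) x :=
    ((ContinuousLinearMap.apply ℝ A v).hasFDerivAt).comp x (hg.fderiv_diffAt x).hasFDerivAt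
  refine ⟨_, h2.mul' h1, fun u => ?_⟩
  simp [betaD, mulLeftRight_apply, smul_eq_mul, sub_eq_add_neg, mul_assoc, add_comm]

lemma pair_hasFDerivAt (Bc : A →L[ℝ] A →L[ℝ] ℝ) {f k : E → A} {Lf Lk : E →L[ℝ] A} {x : E}
    (hf : HasFDerivAt f Lf x) (hk : HasFDerivAt k Lk x) :
    ∃ L : E →L[ℝ] ℝ, HasFDerivAt (fun y => Bc (f y) (k y)) L x ∧
      ∀ u, L u = Bc (Lf u) (k x) + Bc (f x) (Lk u) := by
  have hB : IsBoundedBilinearMap ℝ (fun p : A × A => Bc p.1 p.2) := Bc.isBoundedBilinearMap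
  have h := (hB.hasFDerivAt (f x, k x)).comp x (hf.prodMk hk)
  exact ⟨_, h, fun u => by simp [hB.deriv_apply]; exact add_comm _ _⟩

lemma lamForm_hasFDerivAt (B : A →ₗ[ℝ] A →ₗ[ℝ] ℝ) (Bc : A →L[ℝ] A →L[ℝ] ℝ)
    (hBeq : ∀ a b : A, Bc a b = B a b) {g₁ g₂ : E → A}
    (h₁ : SmoothUnitMap g₁) (h₂ : SmoothUnitMap g₂) (x v w : E) :
    ∃ L : E →L[ℝ] ℝ, HasFDerivAt (fun y => lamForm B g₁ g₂ y v w) L x ∧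
      ∀ u, L u = (1/2) * (
        (B (Ring.inverse (g₁ x) * (fderiv ℝ (fderiv ℝ g₁) x u v)
              - alphaD g₁ x u * alphaD g₁ x v) (betaD g₂ x w)
          + B (alphaD g₁ x v) ((fderiv ℝ (fderiv ℝ g₂) x u w) * Ring.inverse (g₂ x)
              - betaD g₂ x w * betaD g₂ x u))
        - (B (Ring.inverse (g₁ x) * (fderiv ℝ (fderiv ℝ g₁) x u w)
              - alphaD g₁ x u * alphaD g₁ x w) (betaD g₂ x v)
          + B (alphaD g₁ x w) ((fderiv ℝ (fderiv ℝ g₂) x u v) * Ring.inverse (g₂ x)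
              - betaD g₂ x v * betaD g₂ x u))) := by
  obtain ⟨Lav, hav, havu⟩ := alphaD_hasFDerivAt h₁ x v
  obtain ⟨Law, haw, hawu⟩ := alphaD_hasFDerivAt h₁ x w
  obtain ⟨Lbv, hbv, hbvu⟩ := betaD_hasFDerivAt h₂ x v
  obtain ⟨Lbw, hbw, hbwu⟩ := betaD_hasFDerivAt h₂ x w
  obtain ⟨L1, hL1, hL1u⟩ := pair_hasFDerivAt Bc hav hbw
  obtain ⟨L2, hL2, hL2u⟩ := pair_hasFDerivAt Bc haw hbv
  have heq : (fun y => lamForm B g₁ g₂ y v w)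
      = fun y => (1/2 : ℝ) * (Bc (alphaD g₁ y v) (betaD g₂ y w)
          - Bc (alphaD g₁ y w) (betaD g₂ y v)) := by
    funext y; simp [lamForm, hBeq]
  refine ⟨_, heq ▸ ((hL1.sub hL2).const_mul (1/2 : ℝ)), fun u => ?_⟩
  simp only [ContinuousLinearMap.smul_apply, ContinuousLinearMap.sub_apply, smul_eq_mul,
    hL1u, hL2u, havu, hawu, hbvu, hbwu, hBeq]

lemma SmoothUnitMap.mul' {g₁ g₂ : E → A} (h₁ : SmoothUnitMap g₁) (h₂ : SmoothUnitMap g₂) :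
    SmoothUnitMap (g₁ * g₂) := ⟨h₁.1.mul h₂.1, fun x => (h₁.2 x).mul (h₂.2 x)⟩

lemma ring_inverse_mul {a b : A} (ha : IsUnit a) (hb : IsUnit b) :
    Ring.inverse (a * b) = Ring.inverse b * Ring.inverse a := by
  have h : a * b = ↑(ha.unit * hb.unit) := by
    rw [Units.val_mul, ha.unit_spec, hb.unit_spec]
  rw [h, Ring.inverse_unit, mul_inv_rev, Units.val_mul, ← Ring.inverse_unit, ← Ring.inverse_unit,
    ha.unit_spec, hb.unit_spec]

lemma betaD_eq {g : E → A} (hg : SmoothUnitMap g) (x v : E) :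
    betaD g x v = g x * alphaD g x v * Ring.inverse (g x) := by
  unfold betaD alphaD
  rw [← mul_assoc, Ring.mul_inverse_cancel _ (hg.2 x), one_mul]

lemma alphaD_mul {g₁ g₂ : E → A} (h₁ : SmoothUnitMap g₁) (h₂ : SmoothUnitMap g₂) (x v : E) :
    alphaD (g₁ * g₂) x v
      = alphaD g₂ x v + Ring.inverse (g₂ x) * alphaD g₁ x v * g₂ x := by
  have hfun : (g₁ * g₂ : E → A) = fun y => g₁ y * g₂ y := rfl
  have hD : fderiv ℝ (g₁ * g₂) x v
      = g₁ x * fderiv ℝ g₂ x v + fderiv ℝ g₁ x v * g₂ x := by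
    rw [hfun, fderiv_fun_mul' (h₁.diffAt x) (h₂.diffAt x)]
    simp [smul_eq_mul]
  unfold alphaD
  have hx : (g₁ * g₂) x = g₁ x * g₂ x := rfl
  rw [hD, hx, ring_inverse_mul (h₁.2 x) (h₂.2 x), mul_add]
  congr 1
  · rw [mul_assoc, ← mul_assoc (Ring.inverse (g₁ x)), Ring.inverse_mul_cancel _ (h₁.2 x), one_mul]
  · rw [mul_assoc, mul_assoc, mul_assoc]

lemma keyW (B : A →ₗ[ℝ] A →ₗ[ℝ] ℝ) (Bsymm : ∀ x y : A, B x y = B y x)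
    (Binv : ∀ x y z : A, B (x * y) z = B x (y * z)) {h : A} (hh : IsUnit h)
    (a₀ a₁ a₂ b₀ b₁ b₂ : A) :
    B (a₁*a₀ - a₀*a₁) (h*b₂*Ring.inverse h) + B (a₂*a₁ - a₁*a₂) (h*b₀*Ring.inverse h)
    + B (a₀*a₂ - a₂*a₀) (h*b₁*Ring.inverse h)
    + B a₀ ((h*b₂*Ring.inverse h)*(h*b₁*Ring.inverse h)
            - (h*b₁*Ring.inverse h)*(h*b₂*Ring.inverse h))
    + B a₁ ((h*b₀*Ring.inverse h)*(h*b₂*Ring.inverse h)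
            - (h*b₂*Ring.inverse h)*(h*b₀*Ring.inverse h))
    + B a₂ ((h*b₁*Ring.inverse h)*(h*b₀*Ring.inverse h)
            - (h*b₀*Ring.inverse h)*(h*b₁*Ring.inverse h))
    = B a₀ (a₁*a₂ - a₂*a₁) + B b₀ (b₁*b₂ - b₂*b₁)
      - B (b₀ + Ring.inverse h * a₀ * h)
          ((b₁ + Ring.inverse h * a₁ * h) * (b₂ + Ring.inverse h * a₂ * h)
           - (b₂ + Ring.inverse h * a₂ * h) * (b₁ + Ring.inverse h * a₁ * h)) := by
  set hi := Ring.inverse h with hhi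
  have h1 : hi * h = 1 := Ring.inverse_mul_cancel _ hh
  have h2 : h * hi = 1 := Ring.mul_inverse_cancel _ hh
  have hih : ∀ X : A, hi * (h * X) = X := fun X => by rw [← mul_assoc, h1, one_mul]
  have hconj : ∀ y z : A, (h*y*hi)*(h*z*hi) = h*(y*z)*hi := by
    intro y z; simp only [mul_assoc, hih]
  have hhi' : ∀ X : A, h * (hi * X) = X := fun X => by rw [← mul_assoc, h2, one_mul]
  have hcc : ∀ x y : A, (hi*x*h)*(hi*y*h) = hi*(x*y)*h := by
    intro x y
    simp only [mul_assoc, hhi']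
  have hpair : ∀ x y : A, B x (h*y*hi) = B (hi*x*h) y := by
    intro x y
    calc B x (h*y*hi) = B x (h*(y*hi)) := by rw [mul_assoc]
      _ = B (x*h) (y*hi) := (Binv _ _ _).symm
      _ = B ((x*h)*y) hi := (Binv _ _ _).symm
      _ = B hi ((x*h)*y) := Bsymm _ _
      _ = B (hi*(x*h)) y := (Binv _ _ _).symm
      _ = B (hi*x*h) y := by rw [← mul_assoc]
  have cyc : ∀ x y z : A, B x (y*z) = B y (z*x) := by
    intro x y z
    calc B x (y*z) = B (x*y) z := (Binv _ _ _).symm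
      _ = B z (x*y) := Bsymm _ _
      _ = B (z*x) y := (Binv _ _ _).symm
      _ = B y (z*x) := Bsymm _ _
  have hcollapse : ∀ y : A, h * (hi*y*h) * hi = y := fun y => by
    simp only [mul_assoc, h2, mul_one, hhi']
  have hBconj : ∀ x y : A, B x y = B (hi*x*h) (hi*y*h) := by
    intro x y
    rw [← hpair, hcollapse]
  simp only [hconj, map_sub, map_add, LinearMap.sub_apply, LinearMap.add_apply,
    mul_add, add_mul, sub_mul, mul_sub, hpair]
  rw [hBconj a₀ (a₁*a₂), hBconj a₀ (a₂*a₁)]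
  simp only [← hcc]
  generalize hi * a₀ * h = c₀
  generalize hi * a₁ * h = c₁
  generalize hi * a₂ * h = c₂
  linear_combination (Binv c₁ c₀ b₂) + (cyc c₁ c₀ b₂)
    - (Binv c₀ c₁ b₂)
    + (Binv c₂ c₁ b₀) + (cyc c₂ c₁ b₀) + (cyc c₁ b₀ c₂)
    - (Binv c₁ c₂ b₀) - (cyc c₁ c₂ b₀) - (cyc c₂ b₀ c₁)
    + (Binv c₀ c₂ b₁)
    - (Binv c₂ c₀ b₁) - (cyc c₂ c₀ b₁)
    + (cyc c₁ b₀ b₂) + (cyc b₀ c₁ b₂) - (cyc b₀ c₂ b₁) - (cyc c₂ b₀ b₁)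

lemma extDeriv2_lamForm (B : A →ₗ[ℝ] A →ₗ[ℝ] ℝ) (Bc : A →L[ℝ] A →L[ℝ] ℝ)
    (hBeq : ∀ a b : A, Bc a b = B a b) {g₁ g₂ : E → A}
    (h₁ : SmoothUnitMap g₁) (h₂ : SmoothUnitMap g₂) (x u₀ u₁ u₂ : E) :
    extDeriv2 (fun y v w => lamForm B g₁ g₂ y v w) x u₀ u₁ u₂
      = (1/2) * (B (alphaD g₁ x u₁ * alphaD g₁ x u₀ - alphaD g₁ x u₀ * alphaD g₁ x u₁)
            (betaD g₂ x u₂)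
        + B (alphaD g₁ x u₂ * alphaD g₁ x u₁ - alphaD g₁ x u₁ * alphaD g₁ x u₂)
            (betaD g₂ x u₀)
        + B (alphaD g₁ x u₀ * alphaD g₁ x u₂ - alphaD g₁ x u₂ * alphaD g₁ x u₀)
            (betaD g₂ x u₁)
        + B (alphaD g₁ x u₀) (betaD g₂ x u₂ * betaD g₂ x u₁ - betaD g₂ x u₁ * betaD g₂ x u₂)
        + B (alphaD g₁ x u₁) (betaD g₂ x u₀ * betaD g₂ x u₂ - betaD g₂ x u₂ * betaD g₂ x u₀)
        + B (alphaD g₁ x u₂) (betaD g₂ x u₁ * betaD g₂ x u₀ - betaD g₂ x u₀ * betaD g₂ x u₁)) := by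
  obtain ⟨L0, hd0, hu0⟩ := lamForm_hasFDerivAt B Bc hBeq h₁ h₂ x u₁ u₂
  obtain ⟨L1, hd1, hu1⟩ := lamForm_hasFDerivAt B Bc hBeq h₁ h₂ x u₀ u₂
  obtain ⟨L2, hd2, hu2⟩ := lamForm_hasFDerivAt B Bc hBeq h₁ h₂ x u₀ u₁
  unfold extDeriv2
  rw [hd0.fderiv, hd1.fderiv, hd2.fderiv, hu0 u₀, hu1 u₁, hu2 u₂]
  rw [h₁.symmD2 x u₁ u₀, h₁.symmD2 x u₂ u₀, h₁.symmD2 x u₂ u₁,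
    h₂.symmD2 x u₁ u₀, h₂.symmD2 x u₂ u₀, h₂.symmD2 x u₂ u₁]
  simp only [map_sub, map_add, LinearMap.sub_apply, LinearMap.add_apply]
  ring

lemma lamForm_diffAt (B : A →ₗ[ℝ] A →ₗ[ℝ] ℝ) (Bc : A →L[ℝ] A →L[ℝ] ℝ)
    (hBeq : ∀ a b : A, Bc a b = B a b) {g₁ g₂ : E → A}
    (h₁ : SmoothUnitMap g₁) (h₂ : SmoothUnitMap g₂) (x v w : E) :
    DifferentiableAt ℝ (fun y => lamForm B g₁ g₂ y v w) x := by
  obtain ⟨L, hL, -⟩ := lamForm_hasFDerivAt B Bc hBeq h₁ h₂ x v w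
  exact hL.differentiableAt

lemma extDeriv2_split (ω₁ ω₂ ω₃ ω₄ : E → E → E → ℝ) (x u₀ u₁ u₂ : E)
    (h : ∀ v w : E, DifferentiableAt ℝ (fun y => ω₁ y v w) x
        ∧ DifferentiableAt ℝ (fun y => ω₂ y v w) x
        ∧ DifferentiableAt ℝ (fun y => ω₃ y v w) x
        ∧ DifferentiableAt ℝ (fun y => ω₄ y v w) x) :
    extDeriv2 (fun y v w => ω₁ y v w + ω₂ y v w - ω₃ y v w - ω₄ y v w) x u₀ u₁ u₂
      = extDeriv2 ω₁ x u₀ u₁ u₂ + extDeriv2 ω₂ x u₀ u₁ u₂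
          - extDeriv2 ω₃ x u₀ u₁ u₂ - extDeriv2 ω₄ x u₀ u₁ u₂ := by
  have key : ∀ v w : E, fderiv ℝ (fun y => ω₁ y v w + ω₂ y v w - ω₃ y v w - ω₄ y v w) x
      = fderiv ℝ (fun y => ω₁ y v w) x + fderiv ℝ (fun y => ω₂ y v w) x
        - fderiv ℝ (fun y => ω₃ y v w) x - fderiv ℝ (fun y => ω₄ y v w) x := by
    intro v w
    obtain ⟨h1, h2, h3, h4⟩ := h v w
    rw [fderiv_fun_sub ((by exact (h1.add h2).sub h3 : DifferentiableAt ℝ (fun y => ω₁ y v w + ω₂ y v w - ω₃ y v w) x)) h4,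
      fderiv_fun_sub ((by exact h1.add h2 : DifferentiableAt ℝ (fun y => ω₁ y v w + ω₂ y v w) x)) h3, fderiv_fun_add h1 h2]
  unfold extDeriv2
  rw [key u₁ u₂, key u₀ u₂, key u₀ u₁]
  simp only [ContinuousLinearMap.sub_apply, ContinuousLinearMap.add_apply]
  ring


end Aux

theorem annulus_form_closed
    {E : Type*} [NormedAddCommGroup E] [NormedSpace ℝ E]
    {A : Type*} [NormedRing A] [NormedAlgebra ℝ A] [CompleteSpace A]
    (B : A →ₗ[ℝ] A →ₗ[ℝ] ℝ)
    (Bcont : Continuous fun p : A × A => B p.1 p.2)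
    (Bsymm : ∀ x y : A, B x y = B y x)
    (Binv : ∀ x y z : A, B (x * y) z = B x (y * z))
    (𝔯 𝔟 : Submodule ℝ A)
    (h𝔯 : IsIsotropicSubalg B 𝔯) (h𝔟 : IsIsotropicSubalg B 𝔟)
    (r₁ r₂ b₁ b₂ g : E → A)
    (hr₁ : SmoothUnitMap r₁) (hr₂ : SmoothUnitMap r₂)
    (hb₁ : SmoothUnitMap b₁) (hb₂ : SmoothUnitMap b₂)
    (hg : SmoothUnitMap g)
    (hαr₁ : ∀ x u : E, alphaD r₁ x u ∈ 𝔯) (hαr₂ : ∀ x u : E, alphaD r₂ x u ∈ 𝔯)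
    (hαb₁ : ∀ x u : E, alphaD b₁ x u ∈ 𝔟) (hαb₂ : ∀ x u : E, alphaD b₂ x u ∈ 𝔟)
    (hrel : r₁ * b₁ * g = g * r₂ * b₂) :
    ∀ x u₀ u₁ u₂ : E,
      extDeriv2 (fun x u w =>
          lamForm B r₁ b₁ x u w + lamForm B (r₁ * b₁) g x u w
            - lamForm B g r₂ x u w - lamForm B (g * r₂) b₂ x u w) x u₀ u₁ u₂ = 0 := by
  intro x u₀ u₁ u₂
  obtain ⟨C, hC⟩ := exists_bound_of_continuous B Bcont
  set Bc : A →L[ℝ] A →L[ℝ] ℝ := LinearMap.mkContinuousOfExistsBound₂ B ⟨C, hC⟩ with hBcdef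
  have hBeq : ∀ a b : A, Bc a b = B a b := fun a b => rfl
  have hrb : SmoothUnitMap (r₁ * b₁) := hr₁.mul' hb₁
  have hgr : SmoothUnitMap (g * r₂) := hg.mul' hr₂
  rw [extDeriv2_split (lamForm B r₁ b₁) (lamForm B (r₁ * b₁) g) (lamForm B g r₂)
      (lamForm B (g * r₂) b₂) x u₀ u₁ u₂
      (fun v w => ⟨lamForm_diffAt B Bc hBeq hr₁ hb₁ x v w,
        lamForm_diffAt B Bc hBeq hrb hg x v w,
        lamForm_diffAt B Bc hBeq hg hr₂ x v w,
        lamForm_diffAt B Bc hBeq hgr hb₂ x v w⟩)]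
  rw [extDeriv2_lamForm B Bc hBeq hr₁ hb₁ x u₀ u₁ u₂,
    extDeriv2_lamForm B Bc hBeq hrb hg x u₀ u₁ u₂,
    extDeriv2_lamForm B Bc hBeq hg hr₂ x u₀ u₁ u₂,
    extDeriv2_lamForm B Bc hBeq hgr hb₂ x u₀ u₁ u₂]
  simp only [betaD_eq hb₁ x, betaD_eq hg x, betaD_eq hr₂ x, betaD_eq hb₂ x]
  have hW₁ := keyW B Bsymm Binv (hb₁.2 x) (alphaD r₁ x u₀) (alphaD r₁ x u₁) (alphaD r₁ x u₂)
    (alphaD b₁ x u₀) (alphaD b₁ x u₁) (alphaD b₁ x u₂)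
  have hW₂ := keyW B Bsymm Binv (hg.2 x) (alphaD (r₁ * b₁) x u₀) (alphaD (r₁ * b₁) x u₁)
    (alphaD (r₁ * b₁) x u₂) (alphaD g x u₀) (alphaD g x u₁) (alphaD g x u₂)
  have hW₃ := keyW B Bsymm Binv (hr₂.2 x) (alphaD g x u₀) (alphaD g x u₁) (alphaD g x u₂)
    (alphaD r₂ x u₀) (alphaD r₂ x u₁) (alphaD r₂ x u₂)
  have hW₄ := keyW B Bsymm Binv (hb₂.2 x) (alphaD (g * r₂) x u₀) (alphaD (g * r₂) x u₁)
    (alphaD (g * r₂) x u₂) (alphaD b₂ x u₀) (alphaD b₂ x u₁) (alphaD b₂ x u₂)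
  rw [← alphaD_mul hr₁ hb₁ x u₀, ← alphaD_mul hr₁ hb₁ x u₁, ← alphaD_mul hr₁ hb₁ x u₂] at hW₁
  rw [← alphaD_mul hrb hg x u₀, ← alphaD_mul hrb hg x u₁, ← alphaD_mul hrb hg x u₂,
    hrel] at hW₂
  rw [← alphaD_mul hg hr₂ x u₀, ← alphaD_mul hg hr₂ x u₁, ← alphaD_mul hg hr₂ x u₂] at hW₃
  rw [← alphaD_mul hgr hb₂ x u₀, ← alphaD_mul hgr hb₂ x u₁, ← alphaD_mul hgr hb₂ x u₂] at hW₄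
  have hz₁ : B (alphaD r₁ x u₀)
      (alphaD r₁ x u₁ * alphaD r₁ x u₂ - alphaD r₁ x u₂ * alphaD r₁ x u₁) = 0 :=
    h𝔯.2 _ (hαr₁ x u₀) _ (h𝔯.1 _ (hαr₁ x u₁) _ (hαr₁ x u₂))
  have hz₂ : B (alphaD b₁ x u₀)
      (alphaD b₁ x u₁ * alphaD b₁ x u₂ - alphaD b₁ x u₂ * alphaD b₁ x u₁) = 0 :=
    h𝔟.2 _ (hαb₁ x u₀) _ (h𝔟.1 _ (hαb₁ x u₁) _ (hαb₁ x u₂))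
  have hz₃ : B (alphaD r₂ x u₀)
      (alphaD r₂ x u₁ * alphaD r₂ x u₂ - alphaD r₂ x u₂ * alphaD r₂ x u₁) = 0 :=
    h𝔯.2 _ (hαr₂ x u₀) _ (h𝔯.1 _ (hαr₂ x u₁) _ (hαr₂ x u₂))
  have hz₄ : B (alphaD b₂ x u₀)
      (alphaD b₂ x u₁ * alphaD b₂ x u₂ - alphaD b₂ x u₂ * alphaD b₂ x u₁) = 0 :=
    h𝔟.2 _ (hαb₂ x u₀) _ (h𝔟.1 _ (hαb₂ x u₁) _ (hαb₂ x u₂))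
  have hz₅ : B (alphaD g x u₀)
      (alphaD g x u₁ * alphaD g x u₂ - alphaD g x u₂ * alphaD g x u₁)
      = B (alphaD g x u₀)
      (alphaD g x u₁ * alphaD g x u₂ - alphaD g x u₂ * alphaD g x u₁) := rfl
  linear_combination (1/2 : ℝ) * hW₁ + (1/2 : ℝ) * hW₂ - (1/2 : ℝ) * hW₃ - (1/2 : ℝ) * hW₄
    + (1/2 : ℝ) * hz₁ + (1/2 : ℝ) * hz₂ - (1/2 : ℝ) * hz₃ - (1/2 : ℝ) * hz₄
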